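/- Decrease bound for the strong Lyapunov function of the heavy ball method: let ψ > 0 be such that ν := ψ(ψ - λ) < 0, and set a(z₁) := γ(L(z₁) - L*), b(z₁, z₂) := ½‖ψ(z₁ - z₁*) + z₂‖², c(z₁) := ½‖z₁ - z₁*‖². Then along every solution of the heavy ball system, for all t ≥ 0, d/dt [V(z₁(t), z₂(t))] ≤ -ψ·(a(z₁(t)) + 2ν·c(z₁(t))) + 2(ψ - λ)·b(z₁(t), z₂(t)). -/

import Mathlib

open scoped RealInnerProductSpace

noncomputable section

/-! Along a trajectory, `dV/dt = -ψγ⟪∇L(z₁), z₁ - z₁*⟫ + (ψ - λ)‖z₂‖² + 2ν⟪z₁ - z₁*, z₂⟫`, while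
expanding `‖ψ(z₁ - z₁*) + z₂‖²` shows that the claimed bound is the same expression with
`⟪∇L(z₁), z₁ - z₁*⟫` replaced by `L(z₁) - L*`. The tangent-plane inequality for the convex `L`
closes the gap. -/

variable {E : Type*} [NormedAddCommGroup E] [InnerProductSpace ℝ E] [CompleteSpace E]

theorem HasGradientAt.comp_hasDerivAt {f : E → ℝ} {g v : E} {c : ℝ → E} {t : ℝ}
    (hf : HasGradientAt f g (c t)) (hc : HasDerivAt c v t) :
    HasDerivAt (fun s => f (c s)) ⟪g, v⟫ t := by
  have h := hf.hasFDerivAt.comp_hasDerivAt t hc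
  rwa [InnerProductSpace.toDual_apply_apply] at h

theorem ConvexOn.inner_gradient_sub_le {s : Set E} {f : E → ℝ} {g x y : E}
    (hf : ConvexOn ℝ s f) (hx : x ∈ s) (hy : y ∈ s) (hg : HasGradientAt f g x) :
    ⟪g, y - x⟫ ≤ f y - f x := by
  set c : ℝ →ᵃ[ℝ] E := AffineMap.lineMap x y
  have hline : ConvexOn ℝ (c ⁻¹' s) (f ∘ c) := hf.comp_affineMap c
  have hderiv : HasDerivAt (f ∘ c) ⟪g, y - x⟫ 0 :=
    HasGradientAt.comp_hasDerivAt (by rwa [AffineMap.lineMap_apply_zero])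
      AffineMap.hasDerivAt_lineMap
  simpa [c, slope_def_field] using
    hline.le_slope_of_hasDerivAt (by simpa [c] using hx) (by simpa [c] using hy) one_pos hderiv

def heavyBallLyapunov (L : E → ℝ) (zs : E) (lam γ ψ : ℝ) (x v : E) : ℝ :=
  γ * (L x - L zs) + (1 / 2) * ‖ψ • (x - zs) + v‖ ^ 2 + (ψ * (ψ - lam) / 2) * ‖x - zs‖ ^ 2

theorem hasDerivAt_heavyBallLyapunov {L : E → ℝ} {zs g : E} {lam γ ψ : ℝ} {z₁ z₂ : ℝ → E}
    {t : ℝ} (hL : HasGradientAt L g (z₁ t)) (hz₁ : HasDerivAt z₁ (z₂ t) t)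
    (hz₂ : HasDerivAt z₂ (-(lam • z₂ t) - γ • g) t) :
    HasDerivAt (fun s => heavyBallLyapunov L zs lam γ ψ (z₁ s) (z₂ s))
      (-(ψ * γ) * ⟪g, z₁ t - zs⟫ + (ψ - lam) * ‖z₂ t‖ ^ 2
        + 2 * (ψ * (ψ - lam)) * ⟪z₁ t - zs, z₂ t⟫) t := by
  have hx : HasDerivAt (fun s => z₁ s - zs) (z₂ t) t := hz₁.sub_const zs
  have hw : HasDerivAt (fun s => ψ • (z₁ s - zs) + z₂ s) (ψ • z₂ t + (-(lam • z₂ t) - γ • g)) t :=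
    (hx.const_smul ψ).add hz₂
  refine ((((hL.comp_hasDerivAt hz₁).sub_const (L zs)).const_mul γ).add
    (hw.norm_sq.const_mul (1 / 2))).add (hx.norm_sq.const_mul (ψ * (ψ - lam) / 2))
    |>.congr_deriv ?_
  simp only [inner_add_left, inner_add_right, inner_sub_right, inner_neg_right,
    real_inner_smul_left, real_inner_smul_right, real_inner_self_eq_norm_sq, real_inner_comm g]
  ring

theorem heavyBall_strong_lyapunov_decrease_general {n : ℕ}
    (L : EuclideanSpace ℝ (Fin n) → ℝ)
    (hC1 : ContDiff ℝ 1 L)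
    (hconv : ConvexOn ℝ Set.univ L)
    (zs : EuclideanSpace ℝ (Fin n))
    (lam γ ψ : ℝ) (hγ : 0 < γ) (hψ : 0 < ψ)
    (z₁ z₂ : ℝ → EuclideanSpace ℝ (Fin n))
    (hz₁ : ∀ t, 0 ≤ t → HasDerivAt z₁ (z₂ t) t)
    (hz₂ : ∀ t, 0 ≤ t →
      HasDerivAt z₂ (-(lam • z₂ t) - γ • gradient L (z₁ t)) t) :
    ∀ t, 0 ≤ t →
      deriv (fun s =>
          γ * (L (z₁ s) - L zs) + (1 / 2) * ‖ψ • (z₁ s - zs) + z₂ s‖ ^ 2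
            + (ψ * (ψ - lam) / 2) * ‖z₁ s - zs‖ ^ 2) t
        ≤ -ψ * (γ * (L (z₁ t) - L zs)
              + 2 * (ψ * (ψ - lam)) * ((1 / 2) * ‖z₁ t - zs‖ ^ 2))
          + 2 * (ψ - lam) * ((1 / 2) * ‖ψ • (z₁ t - zs) + z₂ t‖ ^ 2) := by
  intro t ht
  set g := gradient L (z₁ t)
  have hgrad : HasGradientAt L g (z₁ t) := (hC1.differentiable one_ne_zero _).hasGradientAt
  have htangent : L (z₁ t) - L zs ≤ ⟪g, z₁ t - zs⟫ := by
    have h := hconv.inner_gradient_sub_le (y := zs) trivial trivial hgrad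
    rw [← neg_sub, inner_neg_right] at h
    linarith
  have hexpand : ‖ψ • (z₁ t - zs) + z₂ t‖ ^ 2
      = ψ ^ 2 * ‖z₁ t - zs‖ ^ 2 + 2 * ψ * ⟪z₁ t - zs, z₂ t⟫ + ‖z₂ t‖ ^ 2 := by
    rw [norm_add_sq_real, norm_smul, real_inner_smul_left, mul_pow, Real.norm_of_nonneg hψ.le]
    ring
  calc _ = _ :=
        (hasDerivAt_heavyBallLyapunov (zs := zs) (ψ := ψ) hgrad (hz₁ t ht) (hz₂ t ht)).deriv
    _ ≤ _ := by
      rw [hexpand]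
      linear_combination (ψ * γ) * htangent

/-- Decrease bound for the strong Lyapunov function of the heavy ball method:
`d/dt V(z(t)) ≤ -ψ(a + 2νc) + 2(ψ - λ)b` along solutions, where `ν = ψ(ψ - λ)`. -/
theorem heavyBall_strong_lyapunov_decrease {n : ℕ} (hn : 1 ≤ n)
    (L : EuclideanSpace ℝ (Fin n) → ℝ)
    (hC1 : ContDiff ℝ 1 L)
    (hconv : ConvexOn ℝ Set.univ L)
    (zs : EuclideanSpace ℝ (Fin n))
    (hmin : ∀ z, L zs ≤ L z)
    (huniq : ∀ z, (∀ y, L z ≤ L y) → z = zs)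
    (lam γ ψ : ℝ) (hlam : 0 < lam) (hγ : 0 < γ) (hψ : 0 < ψ)
    (hν : ψ * (ψ - lam) < 0)
    (z₁ z₂ : ℝ → EuclideanSpace ℝ (Fin n))
    (hz₁ : ∀ t, 0 ≤ t → HasDerivAt z₁ (z₂ t) t)
    (hz₂ : ∀ t, 0 ≤ t →
      HasDerivAt z₂ (-(lam • z₂ t) - γ • gradient L (z₁ t)) t) :
    ∀ t, 0 ≤ t →
      deriv (fun s =>
          γ * (L (z₁ s) - L zs) + (1 / 2) * ‖ψ • (z₁ s - zs) + z₂ s‖ ^ 2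
            + (ψ * (ψ - lam) / 2) * ‖z₁ s - zs‖ ^ 2) t
        ≤ -ψ * (γ * (L (z₁ t) - L zs)
              + 2 * (ψ * (ψ - lam)) * ((1 / 2) * ‖z₁ t - zs‖ ^ 2))
          + 2 * (ψ - lam) * ((1 / 2) * ‖ψ • (z₁ t - zs) + z₂ t‖ ^ 2) :=
  heavyBall_strong_lyapunov_decrease_general L hC1 hconv zs lam γ ψ hγ hψ z₁ z₂ hz₁ hz₂
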